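/- arXiv:2305.10629 — 9 statements merged into one kernel-verified Lean document; each statement's English description precedes it below -/
import Mathlib

section
/- A 2-dimensional K-algebra A with basis {e,f} and multiplication e² = a₁e+b₁f, f² = a₂e+b₂f, ef = a₃e+b₃f, fe = a₄e+b₄f is endo-commutative (i.e., (xy)² = x²y² for all x,y ∈ A) if and only if the eight structure constants satisfy the system of cubic equations (2): a₁²a₂+b₁a₂b₂+a₁b₂a₃+b₁a₂a₄ = a₁a₃²+a₂b₃²+a₃²b₃+a₃b₃a₄; a₁²a₂+b₁a₂b₂+b₁a₂a₃+a₁b₂a₄ = a₁a₄²+a₂b₄²+a₃a₄b₄+a₄²b₄; a₁²a₄+b₁a₄²+b₁a₂b₄+a₁a₃b₄ = a₁²a₃+b₁a₂b₃+b₁a₃²+a₁b₃a₄; a₂(a₁a₄+a₄b₄+b₂b₄) = a₂(a₁a₃+b₂b₃+a₃b₃); a₁b₁a₂+b₁b₂²+a₁b₂b₃+b₁a₂b₄ = b₁a₃²+b₂b₃²+a₃b₃²+a₃b₃b₄; a₁b₁a₂+b₁b₂²+b₁a₂b₃+a₁b₂b₄ = b₁a₄²+b₂b₄²+b₃a₄b₄+a₄b₄²;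 b₁(a₁a₄+a₄b₄+b₂b₄) = b₁(a₁a₃+b₂b₃+a₃b₃); b₁a₂a₄+b₂b₃a₄+b₂²b₄+a₂b₄² = b₁a₂a₃+b₂²b₃+a₂b₃²+b₂a₃b₄. -/
/-- The bilinear multiplication on K² (with basis e = (1,0), f = (0,1)) determined by
structure constants: e² = a₁e+b₁f, f² = a₂e+b₂f, ef = a₃e+b₃f, fe = a₄e+b₄f. -/
def mulG {K : Type*} [Field K] (a₁ b₁ a₂ b₂ a₃ b₃ a₄ b₄ : K)
    (x y : K × K) : K × K :=
  (x.1*y.1*a₁ + x.1*y.2*a₃ + x.2*y.1*a₄ + x.2*y.2*a₂,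
   x.1*y.1*b₁ + x.1*y.2*b₃ + x.2*y.1*b₄ + x.2*y.2*b₂)

/-- A 2-dimensional algebra is endo-commutative ((xy)² = x²y² for all x,y) iff its eight
structure constants satisfy the system (2) of cubic equations. -/
theorem stmt2 {K : Type*} [Field K] (a₁ b₁ a₂ b₂ a₃ b₃ a₄ b₄ : K) :
    (∀ x y : K × K,
        mulG a₁ b₁ a₂ b₂ a₃ b₃ a₄ b₄ (mulG a₁ b₁ a₂ b₂ a₃ b₃ a₄ b₄ x y)
          (mulG a₁ b₁ a₂ b₂ a₃ b₃ a₄ b₄ x y)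
        = mulG a₁ b₁ a₂ b₂ a₃ b₃ a₄ b₄ (mulG a₁ b₁ a₂ b₂ a₃ b₃ a₄ b₄ x x)
            (mulG a₁ b₁ a₂ b₂ a₃ b₃ a₄ b₄ y y)) ↔
    (a₁^2*a₂ + b₁*a₂*b₂ + a₁*b₂*a₃ + b₁*a₂*a₄ = a₁*a₃^2 + a₂*b₃^2 + a₃^2*b₃ + a₃*b₃*a₄ ∧
     a₁^2*a₂ + b₁*a₂*b₂ + b₁*a₂*a₃ + a₁*b₂*a₄ = a₁*a₄^2 + a₂*b₄^2 + a₃*a₄*b₄ + a₄^2*b₄ ∧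
     a₁^2*a₄ + b₁*a₄^2 + b₁*a₂*b₄ + a₁*a₃*b₄ = a₁^2*a₃ + b₁*a₂*b₃ + b₁*a₃^2 + a₁*b₃*a₄ ∧
     a₂*(a₁*a₄ + a₄*b₄ + b₂*b₄) = a₂*(a₁*a₃ + b₂*b₃ + a₃*b₃) ∧
     a₁*b₁*a₂ + b₁*b₂^2 + a₁*b₂*b₃ + b₁*a₂*b₄ = b₁*a₃^2 + b₂*b₃^2 + a₃*b₃^2 + a₃*b₃*b₄ ∧
     a₁*b₁*a₂ + b₁*b₂^2 + b₁*a₂*b₃ + a₁*b₂*b₄ = b₁*a₄^2 + b₂*b₄^2 + b₃*a₄*b₄ + a₄*b₄^2 ∧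
     b₁*(a₁*a₄ + a₄*b₄ + b₂*b₄) = b₁*(a₁*a₃ + b₂*b₃ + a₃*b₃) ∧
     b₁*a₂*a₄ + b₂*b₃*a₄ + b₂^2*b₄ + a₂*b₄^2 = b₁*a₂*a₃ + b₂^2*b₃ + a₂*b₃^2 + b₂*a₃*b₄)  := by
  constructor
  · intro h
    have h1 := h (1,0) (0,1)
    have h2 := h (0,1) (1,0)
    have h3 := h (1,0) (1,1)
    have h4 := h (0,1) (1,1)
    simp only [mulG, Prod.mk.injEq] at h1 h2 h3 h4
    refine ⟨?_, ?_, ?_, ?_, ?_, ?_, ?_, ?_⟩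
    · linear_combination -h1.1
    · linear_combination -h2.1
    · linear_combination h1.1 - h3.1
    · linear_combination h4.1 - h2.1
    · linear_combination -h1.2
    · linear_combination -h2.2
    · linear_combination h1.2 - h3.2
    · linear_combination h4.2 - h2.2
  · rintro ⟨e1, e2, e3, e4, e5, e6, e7, e8⟩ x y
    simp only [mulG, Prod.mk.injEq]
    refine ⟨?_, ?_⟩
    · linear_combination (x.2^2*y.1*y.2 - x.1*x.2*y.2^2)*e4 +
        (x.1*x.2*y.1*y.2 - x.2^2*y.1^2)*e2 + (x.1*x.2*y.1*y.2 - x.1^2*y.2^2)*e1 +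
        (x.1*x.2*y.1^2 - x.1^2*y.1*y.2)*e3
    · linear_combination (x.2^2*y.1*y.2 - x.1*x.2*y.2^2)*e8 +
        (x.1*x.2*y.1*y.2 - x.2^2*y.1^2)*e6 + (x.1*x.2*y.1*y.2 - x.1^2*y.2^2)*e5 +
        (x.1*x.2*y.1^2 - x.1^2*y.1*y.2)*e7
end

section
/- Let S(p,q,a,b,c,d) be the 2-dimensional K-algebra with basis {e,f} and multiplication e²=f, f²=pe+qf, ef=ae+bf, fe=ce+df. Then S(p,q,a,b,c,d) is endo-commutative if and only if the following five equations hold: pq+pc = pb²+a²b+abc; p(c−a) = (b−d)(p(b+d)−q(a+c)); p(d−b) = a²−c²; q²+pd = a²+qb²+ab²+abd; q(d−b) = ab−cd. -/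
/-- The 2-dimensional algebra S(p,q,a,b,c,d) on K² with basis e = (1,0), f = (0,1) and
multiplication e² = f, f² = pe+qf, ef = ae+bf, fe = ce+df. -/
def mulS {K : Type*} [Field K] (p q a b c d : K) (x y : K × K) : K × K :=
  (x.1*y.2*a + x.2*y.1*c + x.2*y.2*p,
   x.1*y.1 + x.1*y.2*b + x.2*y.1*d + x.2*y.2*q)

/-- Endo-commutativity: (xy)² = x²y² for all x, y. -/
def IsEC {K : Type*} [Field K] (m : K × K → K × K → K × K) : Prop :=
  ∀ x y : K × K, m (m x y) (m x y) = m (m x x) (m y y)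

/-- Two multiplications on K² give isomorphic algebras iff there is a bijective
K-linear map preserving multiplication. -/
def AlgIso {K : Type*} [Field K] (m₁ m₂ : K × K → K × K → K × K) : Prop :=
  ∃ φ : (K × K) ≃ₗ[K] (K × K), ∀ u v : K × K, φ (m₁ u v) = m₂ (φ u) (φ v)

/-- S(p,q,a,b,c,d) is endo-commutative iff the five equations (4) hold. -/
theorem stmt3 {K : Type*} [Field K] (p q a b c d : K) :
    IsEC (mulS p q a b c d) ↔
      (p*q + p*c = p*b^2 + a^2*b + a*b*c ∧
       p*(c - a) = (b - d)*(p*(b + d) - q*(a + c)) ∧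
       p*(d - b) = a^2 - c^2 ∧
       q^2 + p*d = a^2 + q*b^2 + a*b^2 + a*b*d ∧
       q*(d - b) = a*b - c*d) := by
  constructor
  · intro h
    have h1 := h (1, 0) (0, 1)
    have h2 := h (1, 0) (1, 1)
    have h3 := h (1, 1) (0, 1)
    simp only [mulS, Prod.mk.injEq] at h1 h2 h3
    obtain ⟨h1a, h1b⟩ := h1
    obtain ⟨h2a, h2b⟩ := h2
    obtain ⟨h3a, h3b⟩ := h3
    refine ⟨?_, ?_, ?_, ?_, ?_⟩
    · linear_combination -h1a
    · linear_combination -h3b + h1b + q*h2b - q*h1b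
    · linear_combination -h2a + h1a
    · linear_combination -h1b
    · linear_combination -h2b + h1b
  · rintro ⟨h1, h2, h3, h4, h5⟩ ⟨x1, x2⟩ ⟨y1, y2⟩
    simp only [mulS, Prod.mk.injEq]
    constructor
    · linear_combination (-(x2*y1)^2 + 2*x1*x2*y1*y2 - (x1*y2)^2) * h1
        + (x2^2*y1^2 - x1*x2*y1*y2) * h2
        + (x1*x2*y1^2 - x1^2*y1*y2) * h3
        + (p*x2^2*y1*y2 + (a+c)*x2^2*y1^2 - p*x1*x2*y2^2 - (a+c)*x1*x2*y1*y2) * h5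
    · linear_combination (x2^2*y1*y2 - x1*x2*y2^2) * h2
        + (x2^2*y1^2 - x1*x2*y1*y2) * h3
        + (-(x2*y1)^2 + 2*x1*x2*y1*y2 - (x1*y2)^2) * h4
        + (q*x2^2*y1*y2 + (b+d)*x2^2*y1^2 - q*x1*x2*y2^2
           - (b+d)*x1*x2*y1*y2 + x1*x2*y1^2 - x1^2*y1*y2) * h5
end

section
/- The algebras S(0,q,0,b,0,d) and S(0,q',0,b',0,d') are isomorphic if and only if there exist x,y,w ∈ K with xw ≠ 0 such that x²+q'y²+(b'+d')xy = w, q'w = q, q'y+b'x = b, and q'y+d'x = d. -/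
/-!
An isomorphism `φ` sends `e` to some `x e + y f` and hence `f = e²` to `φ(e)² = w f` with
`w = x² + q' y² + (b' + d') x y`; comparing `φ(f²)`, `φ(ef)`, `φ(fe)` with the products of
the images gives `q' w = q`, `q' y + b' x = b`, `q' y + d' x = d` after cancelling `w`, and
bijectivity is `x w ≠ 0`. Conversely these conditions make the lower triangular map
`(u₁, u₂) ↦ (x u₁, y u₁ + w u₂)` an isomorphism.
-/

section

variable {K : Type*} [Field K]

@[simp]
lemma mulS_zero_apply (q b d : K) (u v : K × K) :
    mulS 0 q 0 b 0 d u v = (0, u.1*v.1 + u.1*v.2*b + u.2*v.1*d + u.2*v.2*q) := by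
  simp [mulS]

lemma exists_params_of_injective_of_map_mul {q b d q' b' d' : K} (φ : (K × K) →ₗ[K] (K × K))
    (hinj : Function.Injective φ)
    (hφ : ∀ u v, φ (mulS 0 q 0 b 0 d u v) = mulS 0 q' 0 b' 0 d' (φ u) (φ v)) :
    ∃ x y w : K, x*w ≠ 0 ∧
      x^2 + q'*y^2 + (b' + d')*x*y = w ∧
      q'*w = q ∧
      q'*y + b'*x = b ∧
      q'*y + d'*x = d := by
  set x := (φ (1, 0)).1
  set y := (φ (1, 0)).2
  set w := x^2 + q'*y^2 + (b' + d')*x*y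
  have hφf : φ (0, 1) = (0, w) := by
    rw [show ((0 : K), (1 : K)) = mulS 0 q 0 b 0 d (1, 0) (1, 0) by simp, hφ]
    simp only [mulS_zero_apply, w, x, y]
    congr 1
    ring
  have hfc (c : K) : φ (0, c) = (0, c * w) := by
    rw [show ((0 : K), c) = c • ((0 : K), (1 : K)) by simp, map_smul, hφf]
    simp
  have hw : w ≠ 0 := by
    intro hw0
    have : φ (0, 1) = φ 0 := by simp [hφf, hw0]
    simpa using hinj this
  have hx : x ≠ 0 := by
    intro hx0
    have : φ (w, -y) = φ 0 := by
      rw [show (w, -y) = w • ((1 : K), (0 : K)) + ((0 : K), -y) by simp, map_add, map_smul, hfc]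
      ext
      · simp [x, hx0]
      · simp [y, mul_comm]
    simpa [hw] using hinj this
  have hff := congrArg Prod.snd (hφ (0, 1) (0, 1))
  have hef := congrArg Prod.snd (hφ (1, 0) (0, 1))
  have hfe := congrArg Prod.snd (hφ (0, 1) (1, 0))
  simp only [mulS_zero_apply, hfc] at hff hef hfe
  refine ⟨x, y, w, mul_ne_zero hx hw, rfl, ?_, ?_, ?_⟩
  · exact mul_right_cancel₀ hw (by linear_combination -hff)
  · exact mul_right_cancel₀ hw (by linear_combination -hef)
  · exact mul_right_cancel₀ hw (by linear_combination -hfe)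

lemma algIso_of_params {q' b' d' x y w : K} (hx : x ≠ 0) (hw : w ≠ 0)
    (hw_def : x^2 + q'*y^2 + (b' + d')*x*y = w) :
    AlgIso (mulS 0 (q'*w) 0 (q'*y + b'*x) 0 (q'*y + d'*x)) (mulS 0 q' 0 b' 0 d') := by
  refine ⟨(LinearEquiv.smulOfNeZero K K x hx).skewProd (LinearEquiv.smulOfNeZero K K w hw)
    (y • LinearMap.id), fun u v => ?_⟩
  simp only [LinearEquiv.skewProd_apply, mulS_zero_apply, LinearEquiv.smulOfNeZero_apply,
    LinearMap.smul_apply, LinearMap.id_apply, smul_eq_mul, mul_zero, Prod.mk.injEq, true_and]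
  subst hw_def
  ring

end

/-- S(0,q,0,b,0,d) ≅ S(0,q',0,b',0,d') iff there exist x,y,w with xw ≠ 0 satisfying (7). -/
theorem stmt7 {K : Type*} [Field K] (q b d q' b' d' : K) :
    AlgIso (mulS 0 q 0 b 0 d) (mulS 0 q' 0 b' 0 d') ↔
      ∃ x y w : K, x*w ≠ 0 ∧
        x^2 + q'*y^2 + (b' + d')*x*y = w ∧
        q'*w = q ∧
        q'*y + b'*x = b ∧
        q'*y + d'*x = d := by
  constructor
  · rintro ⟨φ, hφ⟩
    exact exists_params_of_injective_of_map_mul φ.toLinearMap φ.injective hφ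
  · rintro ⟨x, y, w, hxw, hw_def, rfl, rfl, rfl⟩
    exact algIso_of_params (left_ne_zero_of_mul hxw) (right_ne_zero_of_mul hxw) hw_def
end

section
/- The algebra S(0,q,0,b,0,d) (with e²=f, f²=qf, ef=bf, fe=df) is endo-commutative if and only if q² = qb² and q(d−b) = 0. -/
/-- S(0,q,0,b,0,d) is endo-commutative iff q² = qb² and q(d−b) = 0. -/
theorem stmt8 {K : Type*} [Field K] (q b d : K) :
    IsEC (mulS 0 q 0 b 0 d) ↔ (q^2 = q*b^2 ∧ q*(d - b) = 0) := by
  constructor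
  · intro h
    have h1 := h (1,0) (0,1)
    have h2 := h (0,1) (1,0)
    have h3 := h (1,1) (1,0)
    simp only [mulS, Prod.mk.injEq] at h1 h2 h3
    obtain ⟨-, h1⟩ := h1
    obtain ⟨-, h2⟩ := h2
    obtain ⟨-, h3⟩ := h3
    constructor
    · linear_combination -h1
    · linear_combination h3 - h2
  · rintro ⟨h1, h2⟩ x y
    rcases eq_or_ne q 0 with hq | hq
    · subst hq
      refine Prod.ext ?_ ?_ <;> simp only [mulS] <;> ring
    · have hb : b ^ 2 = q := (mul_left_cancel₀ hq (by linear_combination h1)).symm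
      have hd : d = b := by
        rcases mul_eq_zero.mp h2 with h | h
        · exact absurd h hq
        · exact sub_eq_zero.mp h
      subst hd
      subst hb
      refine Prod.ext ?_ ?_ <;> simp only [mulS] <;> ring
end

section
/- The algebras S(0,0,0,0,0,0) and S(0,0,0,0,0,1) are not isomorphic. -/
/-- S(0,0,0,0,0,0) and S(0,0,0,0,0,1) are not isomorphic. -/
theorem stmt10 {K : Type*} [Field K] :
    ¬ AlgIso (mulS (0:K) 0 0 0 0 0) (mulS 0 0 0 0 0 1) := by
  rintro ⟨φ, hφ⟩
  have h := hφ (φ.symm (0,1)) (φ.symm (1,0))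
  have h' := hφ (φ.symm (1,0)) (φ.symm (0,1))
  have hcomm : mulS (0:K) 0 0 0 0 0 (φ.symm (0,1)) (φ.symm (1,0))
      = mulS (0:K) 0 0 0 0 0 (φ.symm (1,0)) (φ.symm (0,1)) := by
    simp [mulS, mul_comm]
  rw [hcomm, h'] at h
  simp [mulS] at h
end

section
/- For any λ ∈ K, the algebra S(0,0,0,0,0,0) is not isomorphic to S(0,0,0,1,0,λ), and S(0,0,0,0,0,1) is not isomorphic to S(0,0,0,1,0,λ). -/
lemma key11 {K : Type*} [Field K] (d0 lam : K) :
    ¬ AlgIso (mulS (0:K) 0 0 0 0 d0) (mulS 0 0 0 1 0 lam) := by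
  rintro ⟨φ, hφ⟩
  set A : K × K := φ (1,0) with hA
  set B : K × K := φ (0,1) with hB
  -- e² = f in the source
  have hee : mulS (0:K) 0 0 0 0 d0 (1,0) (1,0) = ((0:K),(1:K)) := by
    simp [mulS]
  -- e·f = 0 in the source
  have hef : mulS (0:K) 0 0 0 0 d0 (1,0) (0,1) = (0 : K × K) := by
    simp [mulS, Prod.ext_iff]
  -- B.1 = 0
  have hB1 : B.1 = 0 := by
    have := hφ (1,0) (1,0)
    rw [hee] at this
    have : B = mulS (0:K) 0 0 1 0 lam A A := this
    rw [this]
    simp [mulS]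
  -- A.1 * B.2 = 0
  have hAB : A.1 = 0 ∨ B.2 = 0 := by
    have h := hφ (1,0) (0,1)
    rw [hef, map_zero] at h
    have h2 : (0 : K × K).2 = (mulS (0:K) 0 0 1 0 lam A B).2 := by rw [h]
    simp [mulS, hB1] at h2
    exact h2
  have hB2 : B.2 ≠ 0 := by
    intro h
    have : B = 0 := Prod.ext hB1 h
    have : ((0:K),(1:K)) = (0 : K × K) := φ.injective (by simpa [hB] using this)
    simpa [Prod.ext_iff] using this
  have hA1 : A.1 = 0 := by
    rcases hAB with h | h
    · exact h
    · exact absurd h hB2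
  -- now φ (B.2, -A.2) = 0
  have hv : φ (B.2 • ((1:K),(0:K)) - A.2 • ((0:K),(1:K))) = 0 := by
    rw [map_sub, map_smul, map_smul, ← hA, ← hB]
    ext
    · simp [hA1, hB1]
    · simp [mul_comm]
  have : B.2 = 0 ∧ A.2 = 0 := by simpa using hv
  exact hB2 this.1

/-- For every λ, S(0,0,0,0,0,0) ≇ S(0,0,0,1,0,λ) and S(0,0,0,0,0,1) ≇ S(0,0,0,1,0,λ). -/
theorem stmt11 {K : Type*} [Field K] (lam : K) :
    ¬ AlgIso (mulS (0:K) 0 0 0 0 0) (mulS 0 0 0 1 0 lam) ∧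
    ¬ AlgIso (mulS (0:K) 0 0 0 0 1) (mulS 0 0 0 1 0 lam) := by
  exact ⟨key11 0 lam, key11 1 lam⟩
end

section
/- For λ, λ' ∈ K with λ ≠ λ', the algebras S(0,0,0,1,0,λ) and S(0,0,0,1,0,λ') are not isomorphic. -/
/-- For λ ≠ λ', S(0,0,0,1,0,λ) and S(0,0,0,1,0,λ') are not isomorphic. -/
theorem stmt12 {K : Type*} [Field K] (lam lam' : K) (h : lam ≠ lam') :
    ¬ AlgIso (mulS (0:K) 0 0 1 0 lam) (mulS 0 0 0 1 0 lam') := by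
  rintro ⟨φ, hφ⟩
  set a := (φ (1,0)).1 with ha
  set b := (φ (1,0)).2 with hb
  set c := (φ (0,1)).1 with hc
  set d := (φ (0,1)).2 with hd
  have hpe : φ ((1:K),(0:K)) = (a, b) := by rw [ha, hb]
  have hpf : φ ((0:K),(1:K)) = (c, d) := by rw [hc, hd]
  -- e*e = f
  have h1 := hφ (1,0) (1,0)
  simp only [mulS, mul_zero, zero_mul, mul_one, one_mul, add_zero, zero_add] at h1
  rw [hpf, hpe] at h1
  -- e*f = f
  have h2 := hφ (1,0) (0,1)
  simp only [mulS, mul_zero, zero_mul, mul_one, one_mul, add_zero, zero_add] at h2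
  rw [hpf, hpe] at h2
  -- f*e = lam • f
  have h3 := hφ (0,1) (1,0)
  simp only [mulS, mul_zero, zero_mul, mul_one, one_mul, add_zero, zero_add] at h3
  have hsm : ((0:K), lam) = lam • ((0:K),(1:K)) := by simp
  rw [hsm, map_smul, hpf, hpe] at h3
  have h1a := congrArg Prod.fst h1
  have h2b := congrArg Prod.snd h2
  have h3b := congrArg Prod.snd h3
  simp only [Prod.fst, Prod.snd, Prod.smul_mk, smul_eq_mul, mul_one] at h1a h2b h3b
  rw [h1a] at h2b h3b
  have hdne : d ≠ 0 := by
    intro hd0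
    have h0 : φ (0,1) = φ 0 := by rw [hpf, h1a, hd0, map_zero]; rfl
    have := φ.injective h0
    simp [Prod.ext_iff] at this
  have haone : a = 1 := by
    have : d * a = d * 1 := by linear_combination -h2b
    exact mul_left_cancel₀ hdne this
  rw [haone] at h3b
  apply h
  have : d * lam = d * lam' := by linear_combination h3b
  exact mul_left_cancel₀ hdne this
end

section
/- For any q,b,d ∈ K with q = 0 and any q',b',d' ∈ K with q' ≠ 0, the algebras S(0,0,0,b,0,d) and S(0,q',0,b',0,d') are not isomorphic. -/
/-- If q' ≠ 0 then S(0,0,0,b,0,d) and S(0,q',0,b',0,d') are not isomorphic. -/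
theorem stmt14 {K : Type*} [Field K] (b d q' b' d' : K) (hq' : q' ≠ 0) :
    ¬ AlgIso (mulS (0:K) 0 0 b 0 d) (mulS 0 q' 0 b' 0 d') := by
  rintro ⟨φ, h⟩
  have h1 := h (1,0) (1,0)
  have h2 := h (0,1) (0,1)
  have he : mulS (0:K) 0 0 b 0 d (1,0) (1,0) = (0,1) := by
    simp [mulS]
  have hf : mulS (0:K) 0 0 b 0 d (0,1) (0,1) = 0 := by
    simp [mulS, Prod.ext_iff]
  rw [he] at h1
  rw [hf, map_zero] at h2
  set t : K := (φ (1,0)).1 * (φ (1,0)).1 + (φ (1,0)).1 * (φ (1,0)).2 * b'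
      + (φ (1,0)).2 * (φ (1,0)).1 * d' + (φ (1,0)).2 * (φ (1,0)).2 * q' with ht
  have h1' : φ (0,1) = (0, t) := by
    rw [h1]; simp [mulS, ht]
  rw [h1'] at h2
  simp [mulS, Prod.ext_iff, eq_comm] at h2
  have : t = 0 := by
    rcases h2 with h | h
    · exact h.symm
    · exact absurd h hq'
  rw [this] at h1'
  have : ((0,1) : K × K) = 0 := φ.injective (by simp [h1'])
  simp [Prod.ext_iff] at this
end

section
/- The algebras S(0,0,0,0,0,0) and S(0,1,0,1,0,1) are associative, while S(0,0,0,0,0,1) and S(0,0,0,1,0,λ) (for every λ ∈ K) are not associative. -/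
/-- S(0,0,0,0,0,0) and S(0,1,0,1,0,1) are associative; S(0,0,0,0,0,1) and
S(0,0,0,1,0,λ) (for every λ) are not. -/
theorem stmt19 {K : Type*} [Field K] :
    (∀ x y z : K × K, mulS (0:K) 0 0 0 0 0 (mulS 0 0 0 0 0 0 x y) z
        = mulS 0 0 0 0 0 0 x (mulS 0 0 0 0 0 0 y z)) ∧
    (∀ x y z : K × K, mulS (0:K) 1 0 1 0 1 (mulS 0 1 0 1 0 1 x y) z
        = mulS 0 1 0 1 0 1 x (mulS 0 1 0 1 0 1 y z)) ∧
    ¬ (∀ x y z : K × K, mulS (0:K) 0 0 0 0 1 (mulS 0 0 0 0 0 1 x y) z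
        = mulS 0 0 0 0 0 1 x (mulS 0 0 0 0 0 1 y z)) ∧
    (∀ l : K, ¬ (∀ x y z : K × K, mulS (0:K) 0 0 1 0 l (mulS 0 0 0 1 0 l x y) z
        = mulS 0 0 0 1 0 l x (mulS 0 0 0 1 0 l y z))) := by
  refine ⟨fun x y z => ?_, fun x y z => ?_, fun h => ?_, fun l h => ?_⟩
  · simp only [mulS, Prod.mk.injEq]; constructor <;> ring
  · simp only [mulS, Prod.mk.injEq]; constructor <;> ring
  · have := h (1,0) (1,0) (1,0)
    simp [mulS, Prod.ext_iff] at this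
  · have := h (1,0) (1,0) (0,1)
    simp [mulS, Prod.ext_iff] at this
end
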